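/- Suppose relations x0→x1, x1→x2, x2→x0 (indices mod 3) are all contained in a relation R on a type T. Then R is cyclic; consequently, no strict total order on T contains R. Conversely, if for some j the edge (x_j, x_{j+1 mod 3}) is absent and the only R-edges among {x0, x1, x2} are a subset of {(x0,x1),(x1,x2),(x2,x0)} minus that edge, then the restriction of R to {x0,x1,x2} is acyclic. -/
import Mathlib

private def gdg (j i : Fin 3) : ℕ :=
  if i = j + 1 then 0 else if i = j + 2 then 1 else 2

private lemma gdg_lt : ∀ j i : Fin 3, i ≠ j → gdg j i < gdg j (i + 1) := by decide

/-- Clause gadget: a directed triangle `x₀ → x₁ → x₂ → x₀` inside `R` makes `R` cyclic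
(and hence `R` is contained in no strict total order); conversely, if the only
`R`-edges among the three distinct elements are the triangle edges minus one, then the
restriction of `R` to these elements is acyclic. -/
theorem stmt_15 {T : Type*} (R : T → T → Prop) (x : Fin 3 → T)
    (hinj : Function.Injective x) :
    ((∀ i : Fin 3, R (x i) (x (i + 1))) →
        (¬ Irreflexive (Relation.TransGen R)) ∧
          ∀ co : T → T → Prop, IsStrictTotalOrder T co →
            ¬ (∀ a b, R a b → co a b)) ∧
      (∀ j : Fin 3,
        (∀ a b, a ∈ Set.range x → b ∈ Set.range x → R a b →
            ∃ i : Fin 3, i ≠ j ∧ a = x i ∧ b = x (i + 1)) →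
          ∀ t, ¬ Relation.TransGen
            (fun a b => a ∈ Set.range x ∧ b ∈ Set.range x ∧ R a b) t t) := by
  constructor
  · intro hcyc
    have hc : Relation.TransGen R (x 0) (x 0) := by
      have h0 := hcyc 0
      have h1 := hcyc 1
      have h2 := hcyc 2
      norm_num at h0 h1 h2
      exact (Relation.TransGen.single h0).tail h1 |>.tail h2
    constructor
    · intro hirr; exact hirr _ hc
    · intro co hco hsub
      have h0 := hsub _ _ (hcyc 0)
      have h1 := hsub _ _ (hcyc 1)
      have h2 := hsub _ _ (hcyc 2)
      norm_num at h0 h1 h2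
      exact hco.irrefl _ (hco.trans _ _ _ (hco.trans _ _ _ h0 h1) h2)
  · intro j hedges t ht
    classical
    set R' : T → T → Prop := fun a b => a ∈ Set.range x ∧ b ∈ Set.range x ∧ R a b
    set F : T → ℕ := fun t => if h : t ∈ Set.range x then gdg j h.choose else 0 with hF
    have hstep : ∀ a b, R' a b → F a < F b := by
      rintro a b ⟨ha, hb, hab⟩
      obtain ⟨i, hij, rfl, rfl⟩ := hedges a b ha hb hab
      have e1 : F (x i) = gdg j i := by
        simp only [hF]
        rw [dif_pos ⟨i, rfl⟩]
        congr 1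
        exact hinj (⟨i, rfl⟩ : x i ∈ Set.range x).choose_spec
      have e2 : F (x (i + 1)) = gdg j (i + 1) := by
        simp only [hF]
        rw [dif_pos ⟨i + 1, rfl⟩]
        congr 1
        exact hinj (⟨i + 1, rfl⟩ : x (i + 1) ∈ Set.range x).choose_spec
      rw [e1, e2]
      exact gdg_lt j i hij
    have hmono : ∀ a b, Relation.TransGen R' a b → F a < F b := by
      intro a b h
      induction h with
      | single h => exact hstep _ _ h
      | tail _ h ih => exact ih.trans (hstep _ _ h)
    exact lt_irrefl _ (hmono _ _ ht)
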